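/- Monotonicity under uniform scaling of the matched weights (corrected form of Theorem 1, first condition): let m, n, l satisfy l ≤ m and l ≤ n, let λ_k ≥ 0 for all k < l, ξ_k ≥ 0 for all k < m, η_k ≥ 0 for all k < n, and let 0 < t₁ ≤ t₂. For t > 0 define ξ^{(t)}_k = t·ξ_k for k < l and ξ^{(t)}_k = ξ_k for l ≤ k < m, and similarly η^{(t)}. Then F(m, n, l, λ, ξ^{(t₁)}, η^{(t₁)}) ≤ F(m, n, l, λ, ξ^{(t₂)}, η^{(t₂)}): uniformly increasing the weights of the visual words belonging to similar visual word pairs does not decrease the similarity. -/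
import Mathlib

open Finset

/-- Extend a weight vector on `Fin m` to `ℕ`, zero outside. -/
noncomputable def extW {m : ℕ} (ξ : Fin m → ℝ) (k : ℕ) : ℝ :=
  if h : k < m then ξ ⟨k, h⟩ else 0

/-- The image similarity measurement of Zhang et al. (Eq. 2). -/
noncomputable def F (m n l : ℕ) (lam : Fin l → ℝ) (ξ : Fin m → ℝ) (η : Fin n → ℝ) : ℝ :=
  (∑ k : Fin l, lam k * extW ξ k * extW η k) /
    (Real.sqrt ((∑ k : Fin m, ξ k) * (∑ k : Fin n, η k)) *
      Real.sqrt ((∑ k : Fin l, (lam k) ^ 2 * extW ξ k * extW η k) +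
        (∑ k ∈ Finset.Ico l m, extW ξ k) * (∑ k ∈ Finset.Ico l n, extW η k)))

lemma extW_scaled {m l : ℕ} (ξ : Fin m → ℝ) (t : ℝ) (j : ℕ) :
    extW (fun k => if (k : ℕ) < l then t * ξ k else ξ k) j =
      if j < l then t * extW ξ j else extW ξ j := by
  unfold extW
  by_cases h : j < m <;> by_cases h' : j < l <;> simp [h, h']

lemma extW_nonneg {m : ℕ} {ξ : Fin m → ℝ} (hξ : ∀ k, 0 ≤ ξ k) (j : ℕ) : 0 ≤ extW ξ j := by
  unfold extW; split <;> simp [hξ]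

lemma key_ineq (t₁ t₂ A B Sξ Sη U V : ℝ) (ht₁ : 0 < t₁) (ht : t₁ ≤ t₂)
    (hA : 0 ≤ A) (hB : 0 ≤ B) (hSξ : 0 ≤ Sξ) (hSη : 0 ≤ Sη) (hU : 0 ≤ U) (hV : 0 ≤ V)
    (h1 : Sξ = 0 → A = 0) (h2 : Sη = 0 → A = 0) (h3 : B = 0 → A = 0) :
    (t₁ ^ 2 * A) / (Real.sqrt ((t₁ * Sξ + U) * (t₁ * Sη + V)) * Real.sqrt (t₁ ^ 2 * B + U * V)) ≤
      (t₂ ^ 2 * A) / (Real.sqrt ((t₂ * Sξ + U) * (t₂ * Sη + V)) * Real.sqrt (t₂ ^ 2 * B + U * V)) := by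
  have ht₂ : 0 < t₂ := lt_of_lt_of_le ht₁ ht
  rcases eq_or_lt_of_le hA with hA0 | hApos
  · simp [← hA0]
  have hSξp : 0 < Sξ := lt_of_le_of_ne hSξ (fun h => hApos.ne (h1 h.symm).symm)
  have hSηp : 0 < Sη := lt_of_le_of_ne hSη (fun h => hApos.ne (h2 h.symm).symm)
  have hBp : 0 < B := lt_of_le_of_ne hB (fun h => hApos.ne (h3 h.symm).symm)
  have hP₁ : 0 < (t₁ * Sξ + U) * (t₁ * Sη + V) := by positivity
  have hP₂ : 0 < (t₂ * Sξ + U) * (t₂ * Sη + V) := by positivity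
  have hQ₁ : 0 < t₁ ^ 2 * B + U * V := by positivity
  have hQ₂ : 0 < t₂ ^ 2 * B + U * V := by positivity
  have hD₁ : 0 < Real.sqrt ((t₁ * Sξ + U) * (t₁ * Sη + V)) * Real.sqrt (t₁ ^ 2 * B + U * V) := by
    exact mul_pos (Real.sqrt_pos.mpr hP₁) (Real.sqrt_pos.mpr hQ₁)
  have hD₂ : 0 < Real.sqrt ((t₂ * Sξ + U) * (t₂ * Sη + V)) * Real.sqrt (t₂ ^ 2 * B + U * V) := by
    exact mul_pos (Real.sqrt_pos.mpr hP₂) (Real.sqrt_pos.mpr hQ₂)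
  rw [div_le_div_iff₀ hD₁ hD₂]
  have key2 : t₁ ^ 2 * (Real.sqrt ((t₂ * Sξ + U) * (t₂ * Sη + V)) * Real.sqrt (t₂ ^ 2 * B + U * V)) ≤
      t₂ ^ 2 * (Real.sqrt ((t₁ * Sξ + U) * (t₁ * Sη + V)) * Real.sqrt (t₁ ^ 2 * B + U * V)) := by
    have poly : (t₁ ^ 2) ^ 2 * ((t₂ * Sξ + U) * (t₂ * Sη + V) * (t₂ ^ 2 * B + U * V)) ≤
        (t₂ ^ 2) ^ 2 * ((t₁ * Sξ + U) * (t₁ * Sη + V) * (t₁ ^ 2 * B + U * V)) := by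
      have f1 : t₁ * (t₂ * Sξ + U) ≤ t₂ * (t₁ * Sξ + U) := by nlinarith
      have f2 : t₁ * (t₂ * Sη + V) ≤ t₂ * (t₁ * Sη + V) := by nlinarith
      have f3 : t₁ ^ 2 * (t₂ ^ 2 * B + U * V) ≤ t₂ ^ 2 * (t₁ ^ 2 * B + U * V) := by
        nlinarith [mul_nonneg hU hV, mul_le_mul ht ht ht₁.le (lt_of_lt_of_le ht₁ ht).le]
      have g1 : t₁ * (t₂ * Sξ + U) * (t₁ * (t₂ * Sη + V)) ≤
          t₂ * (t₁ * Sξ + U) * (t₂ * (t₁ * Sη + V)) :=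
        mul_le_mul f1 f2 (by positivity) (by positivity)
      have g2 : t₁ * (t₂ * Sξ + U) * (t₁ * (t₂ * Sη + V)) * (t₁ ^ 2 * (t₂ ^ 2 * B + U * V)) ≤
          t₂ * (t₁ * Sξ + U) * (t₂ * (t₁ * Sη + V)) * (t₂ ^ 2 * (t₁ ^ 2 * B + U * V)) :=
        mul_le_mul g1 f3 (by positivity) (by positivity)
      nlinarith [g2]
    calc t₁ ^ 2 * (Real.sqrt ((t₂ * Sξ + U) * (t₂ * Sη + V)) * Real.sqrt (t₂ ^ 2 * B + U * V))
        = Real.sqrt ((t₁ ^ 2) ^ 2 * ((t₂ * Sξ + U) * (t₂ * Sη + V) * (t₂ ^ 2 * B + U * V))) := by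
          rw [Real.sqrt_mul (sq_nonneg (t₁ ^ 2))
              ((t₂ * Sξ + U) * (t₂ * Sη + V) * (t₂ ^ 2 * B + U * V)),
            Real.sqrt_sq (by positivity : (0:ℝ) ≤ t₁ ^ 2),
            Real.sqrt_mul hP₂.le (t₂ ^ 2 * B + U * V)]
      _ ≤ Real.sqrt ((t₂ ^ 2) ^ 2 * ((t₁ * Sξ + U) * (t₁ * Sη + V) * (t₁ ^ 2 * B + U * V))) :=
          Real.sqrt_le_sqrt poly
      _ = t₂ ^ 2 * (Real.sqrt ((t₁ * Sξ + U) * (t₁ * Sη + V)) * Real.sqrt (t₁ ^ 2 * B + U * V)) := by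
          rw [Real.sqrt_mul (sq_nonneg (t₂ ^ 2))
              ((t₁ * Sξ + U) * (t₁ * Sη + V) * (t₁ ^ 2 * B + U * V)),
            Real.sqrt_sq (by positivity : (0:ℝ) ≤ t₂ ^ 2),
            Real.sqrt_mul hP₁.le (t₁ ^ 2 * B + U * V)]
  nlinarith [mul_le_mul_of_nonneg_left key2 hApos.le]

theorem F_mono_scaling_matched_weights (m n l : ℕ) (hlm : l ≤ m) (hln : l ≤ n)
    (lam : Fin l → ℝ) (ξ : Fin m → ℝ) (η : Fin n → ℝ)
    (hlam : ∀ k, 0 ≤ lam k) (hξ : ∀ k, 0 ≤ ξ k) (hη : ∀ k, 0 ≤ η k)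
    (t₁ t₂ : ℝ) (ht₁ : 0 < t₁) (ht : t₁ ≤ t₂) :
    F m n l lam (fun k => if (k : ℕ) < l then t₁ * ξ k else ξ k)
        (fun k => if (k : ℕ) < l then t₁ * η k else η k) ≤
      F m n l lam (fun k => if (k : ℕ) < l then t₂ * ξ k else ξ k)
        (fun k => if (k : ℕ) < l then t₂ * η k else η k) := by
  set A := ∑ k : Fin l, lam k * extW ξ k * extW η k with hAdef
  set B := ∑ k : Fin l, (lam k) ^ 2 * extW ξ k * extW η k with hBdef
  set Sξ := ∑ k ∈ Finset.range l, extW ξ k with hSξdef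
  set Sη := ∑ k ∈ Finset.range l, extW η k with hSηdef
  set U := ∑ k ∈ Finset.Ico l m, extW ξ k with hUdef
  set V := ∑ k ∈ Finset.Ico l n, extW η k with hVdef
  -- reduction of F on scaled vectors
  have hFred : ∀ t : ℝ,
      F m n l lam (fun k => if (k : ℕ) < l then t * ξ k else ξ k)
        (fun k => if (k : ℕ) < l then t * η k else η k) =
      (t ^ 2 * A) / (Real.sqrt ((t * Sξ + U) * (t * Sη + V)) * Real.sqrt (t ^ 2 * B + U * V)) := by
    intro t
    unfold F
    have hnum : (∑ k : Fin l, lam k * extW (fun k => if (k : ℕ) < l then t * ξ k else ξ k) k *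
        extW (fun k => if (k : ℕ) < l then t * η k else η k) k) = t ^ 2 * A := by
      rw [hAdef, Finset.mul_sum]
      apply Finset.sum_congr rfl
      intro k _
      rw [extW_scaled, extW_scaled, if_pos k.2, if_pos k.2]
      ring
    have hB' : (∑ k : Fin l, (lam k) ^ 2 * extW (fun k => if (k : ℕ) < l then t * ξ k else ξ k) k *
        extW (fun k => if (k : ℕ) < l then t * η k else η k) k) = t ^ 2 * B := by
      rw [hBdef, Finset.mul_sum]
      apply Finset.sum_congr rfl
      intro k _
      rw [extW_scaled, extW_scaled, if_pos k.2, if_pos k.2]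
      ring
    have hsum : ∀ (p : ℕ) (hlp : l ≤ p) (f : Fin p → ℝ),
        (∑ k : Fin p, (if (k : ℕ) < l then t * f k else f k)) =
          t * (∑ k ∈ Finset.range l, extW f k) + ∑ k ∈ Finset.Ico l p, extW f k := by
      intro p hlp f
      have e1 : (∑ k : Fin p, (if (k : ℕ) < l then t * f k else f k)) =
          ∑ k ∈ Finset.range p, extW (fun k => if (k : ℕ) < l then t * f k else f k) k := by
        rw [← Fin.sum_univ_eq_sum_range]
        apply Finset.sum_congr rfl
        intro k _
        simp [extW]
      rw [e1, Finset.range_eq_Ico, ← Finset.sum_Ico_consecutive _ (Nat.zero_le l) hlp,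
          ← Finset.range_eq_Ico]
      congr 1
      · rw [Finset.mul_sum]
        apply Finset.sum_congr rfl
        intro k hk
        rw [extW_scaled, if_pos (Finset.mem_range.mp hk)]
      · apply Finset.sum_congr rfl
        intro k hk
        rw [extW_scaled, if_neg (by simpa using (Finset.mem_Ico.mp hk).1.not_gt)]
    have hIco : ∀ (p : ℕ) (f : Fin p → ℝ),
        (∑ k ∈ Finset.Ico l p, extW (fun k => if (k : ℕ) < l then t * f k else f k) k) =
        ∑ k ∈ Finset.Ico l p, extW f k := by
      intro p f
      apply Finset.sum_congr rfl
      intro k hk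
      rw [extW_scaled, if_neg (by simpa using (Finset.mem_Ico.mp hk).1.not_gt)]
    rw [hnum, hB', hsum m hlm ξ, hsum n hln η, hIco m ξ, hIco n η]
  rw [hFred t₁, hFred t₂]
  -- nonnegativity facts
  have hAn : 0 ≤ A := Finset.sum_nonneg fun k _ => by
    have := extW_nonneg hξ (k : ℕ); have := extW_nonneg hη (k : ℕ); have := hlam k; positivity
  have hBn : 0 ≤ B := Finset.sum_nonneg fun k _ => by
    have := extW_nonneg hξ (k : ℕ); have := extW_nonneg hη (k : ℕ); positivity
  have hSξn : 0 ≤ Sξ := Finset.sum_nonneg fun k _ => extW_nonneg hξ k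
  have hSηn : 0 ≤ Sη := Finset.sum_nonneg fun k _ => extW_nonneg hη k
  have hUn : 0 ≤ U := Finset.sum_nonneg fun k _ => extW_nonneg hξ k
  have hVn : 0 ≤ V := Finset.sum_nonneg fun k _ => extW_nonneg hη k
  have h1 : Sξ = 0 → A = 0 := by
    intro h
    have hz' : ∀ k ∈ Finset.range l, extW ξ k = 0 :=
      (Finset.sum_eq_zero_iff_of_nonneg (fun k _ => extW_nonneg hξ k)).mp h
    apply Finset.sum_eq_zero
    intro k _
    rw [hz' (k : ℕ) (Finset.mem_range.mpr k.2)]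
    ring
  have h2 : Sη = 0 → A = 0 := by
    intro h
    have hz' : ∀ k ∈ Finset.range l, extW η k = 0 :=
      (Finset.sum_eq_zero_iff_of_nonneg (fun k _ => extW_nonneg hη k)).mp h
    apply Finset.sum_eq_zero
    intro k _
    rw [hz' (k : ℕ) (Finset.mem_range.mpr k.2)]
    ring
  have h3 : B = 0 → A = 0 := by
    intro h
    have hz' : ∀ k ∈ (Finset.univ : Finset (Fin l)), (lam k) ^ 2 * extW ξ k * extW η k = 0 :=
      (Finset.sum_eq_zero_iff_of_nonneg (fun k _ => by
        have := extW_nonneg hξ (k : ℕ); have := extW_nonneg hη (k : ℕ); positivity)).mp h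
    apply Finset.sum_eq_zero
    intro k hk
    have := hz' k hk
    have hxk := extW_nonneg hξ (k : ℕ)
    have hyk := extW_nonneg hη (k : ℕ)
    rcases mul_eq_zero.mp this with h' | h'
    · rcases mul_eq_zero.mp h' with h'' | h''
      · rw [pow_eq_zero_iff (by norm_num) |>.mp h'']; ring
      · rw [h'']; ring
    · rw [h']; ring
  exact key_ineq t₁ t₂ A B Sξ Sη U V ht₁ ht hAn hBn hSξn hSηn hUn hVn h1 h2 h3
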